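/- Consider the model y = Xβ₀ + ε, X = ZΠ + η, where Z is a fixed real n×k matrix with ZᵀZ invertible, Π ∈ R^{k×p}, β₀ ∈ R^p, and the pairs (ε_{[g]}, η_{[g]}) are independent across clusters g with mean zero and finite second moments (arbitrary dependence within clusters). Let P = Z(ZᵀZ)^{-1}Zᵀ, M = I_n − P, assume each M_{[g,g]} invertible, and set P̃ = P − B_P·B_M^{-1}·M and P̈ = P − B_P. Let W = [y, X] (n×(1+p)) and let R = (β₀, I_p) be the p×(1+p) matrix whose first column is β₀ followed by the identity. Then E[Wᵀ·((P̃+P̃ᵀ)/2)·W] = Rᵀ Πᵀ Zᵀ Z Π R, E[Wᵀ P̈ W] = Rᵀ Πᵀ Zᵀ Z Π R − Rᵀ Πᵀ Zᵀ B_P Z Π R, and the difference Rᵀ Πᵀ Zᵀ B_P Z Π R is positive semidefinite. -/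

import Mathlib

open Matrix MeasureTheory ProbabilityTheory BigOperators

/-- Index set of `n = n₁ + … + n_G` observations, grouped into `G` clusters. -/
abbrev ClusterIdx {G : ℕ} (ng : Fin G → ℕ) := Σ g : Fin G, Fin (ng g)

/-- The submatrix `A_{[g,h]}`: rows in cluster `g`, columns in cluster `h`. -/
def clusterSub {G : ℕ} {ng : Fin G → ℕ} (A : Matrix (ClusterIdx ng) (ClusterIdx ng) ℝ)
    (g h : Fin G) : Matrix (Fin (ng g)) (Fin (ng h)) ℝ :=
  Matrix.of fun i j => A ⟨g, i⟩ ⟨h, j⟩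

/-- The block-diagonal part `B_A` of a matrix. -/
def blockDiagPart {G : ℕ} {ng : Fin G → ℕ} (A : Matrix (ClusterIdx ng) (ClusterIdx ng) ℝ) :
    Matrix (ClusterIdx ng) (ClusterIdx ng) ℝ :=
  Matrix.of fun x y => if x.1 = y.1 then A x y else 0

/-- The cluster-`g` subvector `v_{[g]}` of a vector. -/
def clusterVec {G : ℕ} {ng : Fin G → ℕ} (v : ClusterIdx ng → ℝ) (g : Fin G) :
    Fin (ng g) → ℝ := fun i => v ⟨g, i⟩

/-- Entrywise expectation `E[Wᵀ A W]` of the random matrix `Wᵀ A W`. -/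
noncomputable def expQuadMatrix {Ω : Type*} [MeasurableSpace Ω] (μ : Measure Ω)
    {n m : Type*} [Fintype n] (W : Ω → Matrix n m ℝ) (A : Matrix n n ℝ) :
    Matrix m m ℝ :=
  Matrix.of fun c d => ∫ ω, ((W ω)ᵀ * A * W ω) c d ∂μ

/-!
Write `W = ZΠR + V` with the reduced-form error `V = ηR + ε e₁ᵀ`, which has mean zero and whose
entries in different clusters are independent. If the diagonal blocks of `A` vanish, every term
`A x y * W x c * W y d` of `WᵀAW` pairs two independent entries, so `E[WᵀAW] = RᵀΠᵀ(ZᵀAZ)ΠR`.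
Both `(P̃ + P̃ᵀ)/2` and `P − B_P` have vanishing diagonal blocks: for `P̃` because `B_P B_M⁻¹` is
block diagonal, so the `g`-th diagonal block of `B_P B_M⁻¹ M` is `P_gg M_gg⁻¹ M_gg = P_gg`.
Since `MZ = 0`, `P̃Z = PZ = Z`, which gives the first identity. Finally `B_P = ∑_g D_g P D_g`,
with `D_g` the diagonal indicator of cluster `g`, is positive semidefinite because `P` is.
-/

section MatrixAlgebra

variable {n k : Type*} [Fintype n]

theorem Matrix.transpose_mul_mul_apply {m m' : Type*}
    (B : Matrix n m ℝ) (A : Matrix n n ℝ) (C : Matrix n m' ℝ) (c : m) (d : m') :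
    (Bᵀ * A * C) c d = ∑ x, ∑ y, A x y * (B x c * C y d) := by
  simp only [mul_apply, transpose_apply, Finset.sum_mul]
  rw [Finset.sum_comm]
  exact Finset.sum_congr rfl fun x _ => Finset.sum_congr rfl fun y _ => by ring

theorem Matrix.transpose_mul_half_smul_add_transpose_mul_of_mul_eq
    {A : Matrix n n ℝ} {Z : Matrix n k ℝ} (hAZ : A * Z = Z) :
    Zᵀ * (((1 : ℝ) / 2) • (A + Aᵀ)) * Z = Zᵀ * Z := by
  have h : Zᵀ * A * Z = Zᵀ * Z := by rw [Matrix.mul_assoc, hAZ]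
  have hT : Zᵀ * Aᵀ * Z = Zᵀ * Z := by
    simpa [transpose_mul, Matrix.mul_assoc] using congr_arg transpose h
  rw [Matrix.mul_smul, Matrix.smul_mul, Matrix.mul_add, Matrix.add_mul, h, hT, ← two_smul ℝ,
    smul_smul]
  norm_num

variable [Fintype k] [DecidableEq k]

theorem Matrix.mul_inv_gram_mul_transpose_mul (Z : Matrix n k ℝ) (hZ : IsUnit (Zᵀ * Z)) :
    Z * (Zᵀ * Z)⁻¹ * Zᵀ * Z = Z := by
  rw [Matrix.mul_assoc _ Zᵀ, nonsing_inv_mul_cancel_right _ _ ((isUnit_iff_isUnit_det _).1 hZ)]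

theorem Matrix.posSemidef_mul_inv_gram_mul_transpose (Z : Matrix n k ℝ) :
    (Z * (Zᵀ * Z)⁻¹ * Zᵀ).PosSemidef := by
  simpa [conjTranspose_eq_transpose_of_trivial] using
    (posSemidef_conjTranspose_mul_self Z).inv.mul_mul_conjTranspose_same Z

end MatrixAlgebra

section ClusterBlocks

variable {G : ℕ} {ng : Fin G → ℕ}

theorem blockDiagPart_eq_blockDiagonal' (A : Matrix (ClusterIdx ng) (ClusterIdx ng) ℝ) :
    blockDiagPart A = blockDiagonal' fun g => clusterSub A g g := by
  ext ⟨g, i⟩ ⟨h, j⟩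
  by_cases hgh : g = h
  · subst hgh
    simp [blockDiagPart, blockDiagonal'_apply_eq, clusterSub]
  · simp [blockDiagPart, blockDiagonal'_apply_ne _ _ _ hgh, hgh]

theorem inv_blockDiagPart {A : Matrix (ClusterIdx ng) (ClusterIdx ng) ℝ}
    (hA : ∀ g, IsUnit (clusterSub A g g)) :
    (blockDiagPart A)⁻¹ = blockDiagonal' fun g => (clusterSub A g g)⁻¹ := by
  refine inv_eq_left_inv ?_
  rw [blockDiagPart_eq_blockDiagonal', ← blockDiagonal'_mul, ← blockDiagonal'_one]
  congr 1
  funext g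
  exact nonsing_inv_mul _ ((isUnit_iff_isUnit_det _).1 (hA g))

theorem clusterSub_blockDiagonal'_mul_self (d : ∀ g, Matrix (Fin (ng g)) (Fin (ng g)) ℝ)
    (N : Matrix (ClusterIdx ng) (ClusterIdx ng) ℝ) (g : Fin G) :
    clusterSub (blockDiagonal' d * N) g g = d g * clusterSub N g g := by
  ext i j
  simp [clusterSub, mul_apply, Fintype.sum_sigma, blockDiagonal'_apply]

theorem clusterSub_sub_blockDiagPart_mul_inv_mul_self
    (P : Matrix (ClusterIdx ng) (ClusterIdx ng) ℝ) {M : Matrix (ClusterIdx ng) (ClusterIdx ng) ℝ}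
    (hM : ∀ g, IsUnit (clusterSub M g g)) (g : Fin G) : clusterSub (P - blockDiagPart P * (blockDiagPart M)⁻¹ * M) g g = 0 := by
  rw [inv_blockDiagPart hM, blockDiagPart_eq_blockDiagonal' P, ← blockDiagonal'_mul]
  change clusterSub P g g - clusterSub (blockDiagonal' _ * M) g g = 0
  rw [clusterSub_blockDiagonal'_mul_self,
    nonsing_inv_mul_cancel_right _ _ ((isUnit_iff_isUnit_det _).1 (hM g)), sub_self]

theorem clusterSub_sub_blockDiagPart_self (A : Matrix (ClusterIdx ng) (ClusterIdx ng) ℝ)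
    (g : Fin G) : clusterSub (A - blockDiagPart A) g g = 0 := by
  ext i j
  simp [clusterSub, blockDiagPart]

theorem clusterSub_smul_add_transpose_self {A : Matrix (ClusterIdx ng) (ClusterIdx ng) ℝ}
    {g : Fin G} (hA : clusterSub A g g = 0) (r : ℝ) : clusterSub (r • (A + Aᵀ)) g g = 0 := by
  ext i j
  have hij := congrFun₂ hA i j
  have hji := congrFun₂ hA j i
  simp_all [clusterSub]

theorem fst_ne_fst_of_clusterSub_self_eq_zero {A : Matrix (ClusterIdx ng) (ClusterIdx ng) ℝ}
    (hA : ∀ g, clusterSub A g g = 0) {x y : ClusterIdx ng} (hxy : A x y ≠ 0) : x.1 ≠ y.1 := by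
  obtain ⟨g, i⟩ := x
  obtain ⟨h, j⟩ := y
  rintro (rfl : g = h)
  exact hxy (congrFun₂ (hA g) i j)

theorem blockDiagPart_eq_sum_diagonal_mul_mul_diagonal
    (A : Matrix (ClusterIdx ng) (ClusterIdx ng) ℝ) :
    blockDiagPart A = ∑ g, diagonal (fun x : ClusterIdx ng => if x.1 = g then 1 else 0) * A *
      diagonal (fun x : ClusterIdx ng => if x.1 = g then 1 else 0) := by
  ext x y
  simp [blockDiagPart, Matrix.sum_apply, diagonal_mul, mul_diagonal, ite_mul, mul_ite, eq_comm]

theorem Matrix.PosSemidef.blockDiagPart {A : Matrix (ClusterIdx ng) (ClusterIdx ng) ℝ}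
    (hA : A.PosSemidef) : (blockDiagPart A).PosSemidef := by
  rw [blockDiagPart_eq_sum_diagonal_mul_mul_diagonal]
  refine posSemidef_sum _ fun g _ => ?_
  simpa using hA.conjTranspose_mul_mul_same
    (diagonal fun x : ClusterIdx ng => if x.1 = g then (1 : ℝ) else 0)

end ClusterBlocks

section Expectation

variable {Ω : Type*} [MeasurableSpace Ω] {μ : Measure Ω} {n m : Type*} [Fintype n]

theorem expQuadMatrix_eq_of_indepFun {W : Ω → Matrix n m ℝ} {S : Matrix n m ℝ}
    {A : Matrix n n ℝ} (hint : ∀ x c, Integrable (fun ω => W ω x c) μ)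
    (hmean : ∀ x c, ∫ ω, W ω x c ∂μ = S x c)
    (hind : ∀ x y c d, A x y ≠ 0 → (fun ω => W ω x c) ⟂ᵢ[μ] (fun ω => W ω y d)) :
    expQuadMatrix μ W A = Sᵀ * A * S := by
  ext c d
  have hterm : ∀ x y, Integrable (fun ω => A x y * (W ω x c * W ω y d)) μ ∧
      ∫ ω, A x y * (W ω x c * W ω y d) ∂μ = A x y * (S x c * S y d) := by
    intro x y
    by_cases hA : A x y = 0
    · simp [hA]
    refine ⟨((hind x y c d hA).integrable_mul (hint x c) (hint y d)).const_mul _, ?_⟩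
    rw [integral_const_mul, ← hmean x c, ← hmean y d,
      ← (hind x y c d hA).integral_mul_eq_mul_integral
        (hint x c).aestronglyMeasurable (hint y d).aestronglyMeasurable]
    rfl
  simp only [expQuadMatrix, of_apply, transpose_mul_mul_apply]
  rw [integral_finsetSum _ fun x _ => integrable_finsetSum _ fun y _ => (hterm x y).1]
  refine Finset.sum_congr rfl fun x _ => ?_
  rw [integral_finsetSum _ fun y _ => (hterm x y).1]
  exact Finset.sum_congr rfl fun y _ => (hterm x y).2

theorem expQuadMatrix_const_add_of_indepFun [IsProbabilityMeasure μ] {S : Matrix n m ℝ}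
    {N : Ω → Matrix n m ℝ} {A : Matrix n n ℝ} (hint : ∀ x c, Integrable (fun ω => N ω x c) μ)
    (hmean : ∀ x c, ∫ ω, N ω x c ∂μ = 0)
    (hind : ∀ x y c d, A x y ≠ 0 → (fun ω => N ω x c) ⟂ᵢ[μ] (fun ω => N ω y d)) :
    expQuadMatrix μ (fun ω => S + N ω) A = Sᵀ * A * S := by
  refine expQuadMatrix_eq_of_indepFun (fun x c => (integrable_const _).add (hint x c))
    (fun x c => ?_) fun x y c d hA => ?_
  · simp [integral_add (integrable_const _) (hint x c), hmean x c]
  · exact (hind x y c d hA).comp (measurable_const_add (S x c)) (measurable_const_add (S y d))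

end Expectation

section ReducedForm

variable {Ω n : Type*} {p : ℕ}

def reducedFormError (ε : Ω → n → ℝ) (η : Ω → n → Fin p → ℝ)
    (R : Matrix (Fin p) (Unit ⊕ Fin p) ℝ) (ω : Ω) : Matrix n (Unit ⊕ Fin p) ℝ :=
  Matrix.of (η ω) * R + vecMulVec (ε ω) (Pi.single (Sum.inl ()) 1)

variable {ε : Ω → n → ℝ} {η : Ω → n → Fin p → ℝ} {R : Matrix (Fin p) (Unit ⊕ Fin p) ℝ}

theorem reducedFormError_apply (ω : Ω) (x : n) (c : Unit ⊕ Fin p) :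
    reducedFormError ε η R ω x c =
      ∑ j, η ω x j * R j c + ε ω x * (Pi.single (Sum.inl ()) 1 : Unit ⊕ Fin p → ℝ) c :=
  rfl

variable [MeasurableSpace Ω] {μ : Measure Ω}

theorem integrable_reducedFormError_apply (hε : ∀ x, Integrable (fun ω => ε ω x) μ)
    (hη : ∀ x j, Integrable (fun ω => η ω x j) μ) (x : n) (c : Unit ⊕ Fin p) :
    Integrable (fun ω => reducedFormError ε η R ω x c) μ := by
  simp only [reducedFormError_apply]
  exact (integrable_finsetSum _ fun j _ => (hη x j).mul_const _).add ((hε x).mul_const _)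

theorem integral_reducedFormError_apply (hε : ∀ x, Integrable (fun ω => ε ω x) μ)
    (hη : ∀ x j, Integrable (fun ω => η ω x j) μ) (hε0 : ∀ x, ∫ ω, ε ω x ∂μ = 0)
    (hη0 : ∀ x j, ∫ ω, η ω x j ∂μ = 0) (x : n) (c : Unit ⊕ Fin p) :
    ∫ ω, reducedFormError ε η R ω x c ∂μ = 0 := by
  simp only [reducedFormError_apply]
  rw [integral_add (integrable_finsetSum _ fun j _ => (hη x j).mul_const _)
    ((hε x).mul_const _), integral_finsetSum _ fun j _ => (hη x j).mul_const _]
  simp [integral_mul_const, hη0, hε0]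

end ReducedForm

theorem indepFun_reducedFormError_apply {Ω : Type*} [MeasurableSpace Ω] {μ : Measure Ω}
    {G : ℕ} {ng : Fin G → ℕ} {p : ℕ} {ε : Ω → ClusterIdx ng → ℝ}
    {η : Ω → ClusterIdx ng → Fin p → ℝ} {R : Matrix (Fin p) (Unit ⊕ Fin p) ℝ}
    (hindep : iIndepFun
      (fun g ω => (clusterVec (ε ω) g, fun i : Fin (ng g) => η ω ⟨g, i⟩)) μ)
    {x y : ClusterIdx ng} (hxy : x.1 ≠ y.1) (c d : Unit ⊕ Fin p) :
    (fun ω => reducedFormError ε η R ω x c) ⟂ᵢ[μ] (fun ω => reducedFormError ε η R ω y d) := by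
  have hφ : ∀ (g : Fin G) (i : Fin (ng g)) (c : Unit ⊕ Fin p), Measurable
      fun q : (Fin (ng g) → ℝ) × (Fin (ng g) → Fin p → ℝ) =>
        ∑ j, q.2 i j * R j c + q.1 i * (Pi.single (Sum.inl ()) 1 : Unit ⊕ Fin p → ℝ) c := by
    intro g i c
    fun_prop
  exact (hindep.indepFun hxy).comp (hφ x.1 x.2 c) (hφ y.1 y.2 d)

theorem data_eq_signal_add_reducedFormError {Ω n k : Type*} [Fintype k] {p : ℕ}
    {Z : Matrix n k ℝ} {Pi0 : Matrix k (Fin p) ℝ} {β₀ : Fin p → ℝ}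
    {ε : Ω → n → ℝ} {η : Ω → n → Fin p → ℝ} {X : Ω → n → Fin p → ℝ} {y : Ω → n → ℝ}
    {W : Ω → Matrix n (Unit ⊕ Fin p) ℝ} {R : Matrix (Fin p) (Unit ⊕ Fin p) ℝ}
    (hX : ∀ ω x j, X ω x j = (Z * Pi0) x j + η ω x j)
    (hy : ∀ ω x, y ω x = (∑ j : Fin p, X ω x j * β₀ j) + ε ω x)
    (hW : ∀ ω, W ω = Matrix.of fun x c =>
      Sum.elim (fun _ : Unit => y ω x) (fun j : Fin p => X ω x j) c)
    (hR : R = Matrix.of fun i c =>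
      Sum.elim (fun _ : Unit => β₀ i) (fun j : Fin p => if i = j then (1 : ℝ) else 0) c)
    (ω : Ω) : W ω = Z * Pi0 * R + reducedFormError ε η R ω := by
  ext x (_ | j)
  · simp [hW, hy, hX, hR, reducedFormError_apply, mul_apply, add_mul, Finset.sum_add_distrib,
      add_assoc]
  · simp [hW, hX, hR, reducedFormError_apply, mul_apply]

/-- the cluster symmetric jackknife keeps a larger signal, Section 3.3:
in the model `y = Xβ₀ + ε`, `X = ZΠ + η`, with `W = [y, X]` and `R = (β₀, I_p)`,
`E[Wᵀ ((P̃+P̃ᵀ)/2) W] = Rᵀ Πᵀ Zᵀ Z Π R`,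
`E[Wᵀ P̈ W] = Rᵀ Πᵀ Zᵀ Z Π R − Rᵀ Πᵀ Zᵀ B_P Z Π R`, and `Rᵀ Πᵀ Zᵀ B_P Z Π R ⪰ 0`. -/
theorem symmetric_cluster_jackknife_signal
    {Ω : Type*} [MeasurableSpace Ω] (μ : Measure Ω) [IsProbabilityMeasure μ]
    {G : ℕ} (ng : Fin G → ℕ) {k p : ℕ}
    (Z : Matrix (ClusterIdx ng) (Fin k) ℝ) (hZZ : IsUnit (Zᵀ * Z))
    (Pi0 : Matrix (Fin k) (Fin p) ℝ) (β₀ : Fin p → ℝ)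
    (ε : Ω → ClusterIdx ng → ℝ) (η : Ω → ClusterIdx ng → Fin p → ℝ)
    (hmeasε : Measurable ε) (hmeasη : Measurable η)
    (hindep : iIndepFun
      (fun g ω => (clusterVec (ε ω) g, fun i : Fin (ng g) => η ω ⟨g, i⟩)) μ)
    (hmeanε : ∀ x : ClusterIdx ng, ∫ ω, ε ω x ∂μ = 0)
    (hmeanη : ∀ (x : ClusterIdx ng) (j : Fin p), ∫ ω, η ω x j ∂μ = 0)
    (hmom2ε : ∀ x : ClusterIdx ng, Integrable (fun ω => (ε ω x) ^ 2) μ)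
    (hmom2η : ∀ (x : ClusterIdx ng) (j : Fin p), Integrable (fun ω => (η ω x j) ^ 2) μ)
    -- the model `X = ZΠ + η`, `y = Xβ₀ + ε`
    (X : Ω → ClusterIdx ng → Fin p → ℝ)
    (hX : ∀ ω x j, X ω x j = (Z * Pi0) x j + η ω x j)
    (y : Ω → ClusterIdx ng → ℝ)
    (hy : ∀ ω x, y ω x = (∑ j : Fin p, X ω x j * β₀ j) + ε ω x)
    -- `W = [y, X]` and `R = (β₀, I_p)`
    (W : Ω → Matrix (ClusterIdx ng) (Unit ⊕ Fin p) ℝ)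
    (hW : ∀ ω, W ω = Matrix.of fun x c =>
      Sum.elim (fun _ : Unit => y ω x) (fun j : Fin p => X ω x j) c)
    (R : Matrix (Fin p) (Unit ⊕ Fin p) ℝ)
    (hR : R = Matrix.of fun i c =>
      Sum.elim (fun _ : Unit => β₀ i) (fun j : Fin p => if i = j then (1 : ℝ) else 0) c)
    -- the projection matrices and the symmetric cluster jackknife matrix
    (P M : Matrix (ClusterIdx ng) (ClusterIdx ng) ℝ)
    (hP : P = Z * (Zᵀ * Z)⁻¹ * Zᵀ) (hM : M = 1 - P)
    (hMgg : ∀ g : Fin G, IsUnit (clusterSub M g g))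
    (Ptilde : Matrix (ClusterIdx ng) (ClusterIdx ng) ℝ)
    (hPtilde : Ptilde = P - blockDiagPart P * (blockDiagPart M)⁻¹ * M) :
    expQuadMatrix μ W (((1 : ℝ) / 2) • (Ptilde + Ptildeᵀ)) =
      Rᵀ * Pi0ᵀ * Zᵀ * Z * Pi0 * R ∧
    expQuadMatrix μ W (P - blockDiagPart P) =
      Rᵀ * Pi0ᵀ * Zᵀ * Z * Pi0 * R - Rᵀ * Pi0ᵀ * Zᵀ * blockDiagPart P * Z * Pi0 * R ∧
    (Rᵀ * Pi0ᵀ * Zᵀ * blockDiagPart P * Z * Pi0 * R).PosSemidef := by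
  have hε : ∀ x, Integrable (fun ω => ε ω x) μ := fun x =>
    ((memLp_two_iff_integrable_sq hmeasε.eval.aestronglyMeasurable).2 (hmom2ε x)).integrable
      one_le_two
  have hη : ∀ x j, Integrable (fun ω => η ω x j) μ := fun x j =>
    ((memLp_two_iff_integrable_sq hmeasη.eval.eval.aestronglyMeasurable).2
      (hmom2η x j)).integrable one_le_two
  have hsignal : ∀ A, (∀ g, clusterSub A g g = 0) →
      expQuadMatrix μ W A = Rᵀ * Pi0ᵀ * (Zᵀ * A * Z) * Pi0 * R := by
    intro A hA
    rw [funext (data_eq_signal_add_reducedFormError hX hy hW hR),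
      expQuadMatrix_const_add_of_indepFun (A := A) (integrable_reducedFormError_apply hε hη)
        (integral_reducedFormError_apply hε hη hmeanε hmeanη) fun x y c d hxy =>
          indepFun_reducedFormError_apply hindep
            (fst_ne_fst_of_clusterSub_self_eq_zero hA hxy) c d]
    simp only [transpose_mul, Matrix.mul_assoc]
  have hPZ : P * Z = Z := hP ▸ mul_inv_gram_mul_transpose_mul Z hZZ
  have hPtZ : Ptilde * Z = Z := by
    rw [hPtilde, hM, Matrix.sub_mul, hPZ, Matrix.mul_assoc _ (1 - P), Matrix.sub_mul,
      Matrix.one_mul, hPZ, sub_self, Matrix.mul_zero, sub_zero]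
  refine ⟨?_, ?_, ?_⟩
  · rw [hsignal _ fun g => clusterSub_smul_add_transpose_self
      (hPtilde ▸ clusterSub_sub_blockDiagPart_mul_inv_mul_self P hMgg g) _,
      transpose_mul_half_smul_add_transpose_mul_of_mul_eq hPtZ]
    simp only [Matrix.mul_assoc]
  · rw [hsignal _ (clusterSub_sub_blockDiagPart_self P), Matrix.mul_sub, Matrix.sub_mul,
      Matrix.mul_assoc Zᵀ P, hPZ]
    simp only [Matrix.mul_sub, Matrix.sub_mul, Matrix.mul_assoc]
  · have hBP : (blockDiagPart P).PosSemidef :=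
      (hP ▸ posSemidef_mul_inv_gram_mul_transpose Z).blockDiagPart
    simpa only [conjTranspose_eq_transpose_of_trivial, transpose_mul, Matrix.mul_assoc] using
      hBP.conjTranspose_mul_mul_same (Z * Pi0 * R)
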